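/- arXiv:2306.00726 — 7 statements merged into one kernel-verified Lean document; each statement's English description precedes it below -/
import Mathlib

section
/- In the graph G constructed from a Set Cover instance, for every u ∈ U and every subset A' ⊆ A, the following are equivalent: (i) A' contains a directed path from v_u to z; (ii) there exists S ∈ 𝒮 with u ∈ S such that (v_u, v^0_S) ∈ A' and P_S ⊆ A'. -/
/-- Vertices of the graph constructed from a Set Cover instance with universe `U`,
family of sets indexed by `ι`, and path-length parameter `q`:
`item u` is `v_u`, `path i j` is `v^j_{S_i}`, and `sink` is `z`. -/
inductive Vtx (U ι : Type) (q : ℕ) : Type where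
  | item : U → Vtx U ι q
  | path : ι → Fin (q + 1) → Vtx U ι q
  | sink : Vtx U ι q
  deriving DecidableEq, Fintype

variable {U ι : Type} [Fintype U] [Fintype ι] [DecidableEq U] [DecidableEq ι]

/-- The arcs `A_U = {(v_u, v^0_S) | S ∈ 𝒮, u ∈ S}`. -/
def AU (Sets : ι → Finset U) (q : ℕ) : Finset (Vtx U ι q × Vtx U ι q) :=
  Finset.univ.biUnion fun i => (Sets i).image fun u => (Vtx.item u, Vtx.path i 0)

/-- The path `P_S = {(v^0_S,v^1_S), …, (v^{q-1}_S,v^q_S), (v^q_S, z)}` for `S = S_i`. -/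
def Ppath (U ι : Type) [DecidableEq U] [DecidableEq ι] (q : ℕ) (i : ι) :
    Finset (Vtx U ι q × Vtx U ι q) :=
  ((Finset.univ : Finset (Fin q)).image fun j =>
      ((Vtx.path i j.castSucc : Vtx U ι q), Vtx.path i j.succ)) ∪
    {(Vtx.path i (Fin.last q), Vtx.sink)}

/-- The arc set `A = A_U ∪ ⋃_{S ∈ 𝒮} P_S`. -/
def arcs (Sets : ι → Finset U) (q : ℕ) : Finset (Vtx U ι q × Vtx U ι q) :=
  AU Sets q ∪ Finset.univ.biUnion (Ppath U ι q)

/-- There is a directed path from `x` to `y` all of whose arcs lie in `A'`. -/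
def Reaches {α : Type} (A' : Finset (α × α)) (x y : α) : Prop :=
  Relation.ReflTransGen (fun a b => (a, b) ∈ A') x y

/-- `A' ⊆ A` is feasible if every `v_u` can reach `z` using only arcs of `A'`. -/
def Feasible {q : ℕ} (A' : Finset (Vtx U ι q × Vtx U ι q)) : Prop :=
  ∀ u : U, Reaches A' (Vtx.item u) Vtx.sink

/-- The number of arcs of `B` incident to `v` (in-degree plus out-degree). -/
def deg {α : Type} [DecidableEq α] (B : Finset (α × α)) (v : α) : ℕ :=
  (B.filter fun a => a.1 = v).card + (B.filter fun a => a.2 = v).card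

/-- The linecard objective `obj_k(B) = Σ_v ⌈deg_B(v)/k⌉`. -/
def obj {α : Type} [Fintype α] [DecidableEq α] (k : ℕ) (B : Finset (α × α)) : ℕ :=
  ∑ v : α, deg B v ⌈/⌉ k

lemma mem_arcs_iff (Sets : ι → Finset U) (q : ℕ) (a b : Vtx U ι q) :
    (a, b) ∈ arcs Sets q ↔
      (∃ i u, u ∈ Sets i ∧ a = Vtx.item u ∧ b = Vtx.path i 0) ∨
      (∃ (i : ι) (j : Fin q), a = Vtx.path i j.castSucc ∧ b = Vtx.path i j.succ) ∨
      (∃ i, a = Vtx.path i (Fin.last q) ∧ b = Vtx.sink) := by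
  simp only [arcs, AU, Ppath, Finset.mem_union, Finset.mem_biUnion, Finset.mem_image,
    Finset.mem_univ, Finset.mem_singleton, Prod.ext_iff, true_and]
  aesop

lemma reach_from_path (Sets : ι → Finset U) {q : ℕ} {A' : Finset (Vtx U ι q × Vtx U ι q)}
    (hA' : A' ⊆ arcs Sets q) :
    ∀ n (i : ι) (j : Fin (q+1)), (j : ℕ) + n = q →
      Reaches A' (Vtx.path i j) Vtx.sink →
      ((∀ j' : Fin q, (j : ℕ) ≤ (j' : ℕ) →
          (Vtx.path i j'.castSucc, Vtx.path i j'.succ) ∈ A')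
        ∧ (Vtx.path i (Fin.last q), Vtx.sink) ∈ A') := by
  intro n
  induction n with
  | zero =>
    intro i j hj h
    have hjl : j = Fin.last q := by
      ext; simpa using hj
    subst hjl
    obtain ⟨b, hb, -⟩ := (Relation.ReflTransGen.cases_head h).resolve_left (by simp)
    rcases (mem_arcs_iff Sets q _ _).mp (hA' hb) with
      ⟨i', u', -, h1, -⟩ | ⟨i', j', h1, h2⟩ | ⟨i', h1, h2⟩
    · exact absurd h1 (by simp)
    · exfalso
      have : (Fin.last q : ℕ) = (j'.castSucc : ℕ) := by
        have := h1; simp [Vtx.path.injEq] at this; exact congrArg Fin.val this.2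
      simp [Fin.last] at this; omega
    · have hi : i' = i ∧ Fin.last q = Fin.last q := by
        simpa [Vtx.path.injEq, eq_comm] using h1
      constructor
      · intro j' hj'
        exfalso
        have := j'.isLt
        simp [Fin.last] at hj'
        omega
      · subst h2; exact hb
  | succ n ih =>
    intro i j hj h
    have hjlt : (j : ℕ) < q := by omega
    obtain ⟨b, hb, hrest⟩ := (Relation.ReflTransGen.cases_head h).resolve_left (by simp)
    rcases (mem_arcs_iff Sets q _ _).mp (hA' hb) with
      ⟨i', u', -, h1, -⟩ | ⟨i', j', h1, h2⟩ | ⟨i', h1, h2⟩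
    · exact absurd h1 (by simp)
    · obtain ⟨rfl, hjj⟩ : i' = i ∧ j'.castSucc = j := by
        simpa [Vtx.path.injEq, eq_comm] using h1
      subst h2
      have hval : (j'.succ : ℕ) + n = q := by
        have : (j'.castSucc : ℕ) = (j : ℕ) := congrArg Fin.val hjj
        simp [Fin.val_succ] at *
        omega
      obtain ⟨hstep, hsink⟩ := ih _ j'.succ hval hrest
      refine ⟨fun j'' hj'' => ?_, hsink⟩
      rcases eq_or_lt_of_le hj'' with heq | hlt
      · have hcv : (j'.castSucc : ℕ) = (j : ℕ) := congrArg Fin.val hjj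
        simp only [Fin.coe_castSucc] at hcv
        have : j'' = j' := Fin.ext (by omega)
        subst this; rw [← hjj] at hb; exact hb
      · have hcv : (j'.castSucc : ℕ) = (j : ℕ) := congrArg Fin.val hjj
        simp only [Fin.coe_castSucc] at hcv
        apply hstep
        simp only [Fin.val_succ]
        omega
    · exfalso
      obtain ⟨-, hjl⟩ : i' = i ∧ Fin.last q = j := by
        simpa [Vtx.path.injEq, eq_comm] using h1
      have : (j : ℕ) = q := by rw [← hjl]; simp [Fin.last]
      omega

/-- In the graph `G` constructed from a Set Cover instance, for every `u ∈ U` and every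
subset `A' ⊆ A`: `A'` contains a directed path from `v_u` to `z` if and only if there is
some `S ∈ 𝒮` with `u ∈ S` such that `(v_u, v^0_S) ∈ A'` and `P_S ⊆ A'`. -/
theorem reaches_iff_exists_set (Sets : ι → Finset U) (q : ℕ) (u : U)
    (A' : Finset (Vtx U ι q × Vtx U ι q)) (hA' : A' ⊆ arcs Sets q) :
    Reaches A' (Vtx.item u) Vtx.sink ↔
      ∃ i : ι, u ∈ Sets i ∧ (Vtx.item u, Vtx.path i 0) ∈ A' ∧ Ppath U ι q i ⊆ A' := by
  constructor
  · intro h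
    obtain ⟨b, hb, hrest⟩ := (Relation.ReflTransGen.cases_head h).resolve_left (by simp)
    rcases (mem_arcs_iff Sets q _ _).mp (hA' hb) with
      ⟨i, u', hu', h1, h2⟩ | ⟨i, j, h1, h2⟩ | ⟨i, h1, h2⟩
    · have huu : u' = u := by simpa [Vtx.item.injEq, eq_comm] using h1
      subst huu; subst h2
      obtain ⟨hstep, hsink⟩ := reach_from_path Sets hA' q i 0 (by simp) hrest
      refine ⟨i, hu', hb, ?_⟩
      intro x hx
      simp only [Ppath, Finset.mem_union, Finset.mem_image, Finset.mem_univ,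
        Finset.mem_singleton, true_and] at hx
      rcases hx with ⟨j, hj⟩ | hx
      · rw [← hj]; exact hstep j (Nat.zero_le _)
      · rw [hx]; exact hsink
    · exact absurd h1 (by simp)
    · exact absurd h1 (by simp)
  · rintro ⟨i, -, h0, hP⟩
    have key : ∀ n (j : Fin (q+1)), (j : ℕ) + n = q → Reaches A' (Vtx.path i j) Vtx.sink := by
      intro n
      induction n with
      | zero =>
        intro j hj
        have : j = Fin.last q := by ext; simpa using hj
        subst this
        exact Relation.ReflTransGen.single (hP (by simp [Ppath]))
      | succ n ih =>
        intro j hj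
        have hjlt : (j : ℕ) < q := by omega
        have harc : (Vtx.path i j, Vtx.path i (⟨j, hjlt⟩ : Fin q).succ) ∈ A' := by
          apply hP
          simp only [Ppath, Finset.mem_union, Finset.mem_image, Finset.mem_univ, true_and]
          exact Or.inl ⟨⟨j, hjlt⟩, by simp [Fin.castSucc]⟩
        exact Relation.ReflTransGen.head harc (ih _ (by simp [Fin.val_succ]; omega))
    exact Relation.ReflTransGen.head h0 (key q 0 (by simp))
end

section
/- In the graph G constructed from a Set Cover instance, if A' ⊆ A is feasible, then the subfamily 𝒞 := {S ∈ 𝒮 | P_S ⊆ A'} is a set cover of U, i.e., ⋃_{S ∈ 𝒞} S = U. -/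
variable {U ι : Type} [Fintype U] [Fintype ι] [DecidableEq U] [DecidableEq ι]

/-! The only arc of `A` leaving `v_u` goes into some `v^0_S` with `u ∈ S`, and the only arc
leaving `v^j_S` is the next arc of `P_S`. So a path from `v_u` to `z` inside `A' ⊆ A` has to enter
some `P_S` with `u ∈ S` at its start and then traverse all of it, whence `P_S ⊆ A'`. -/

omit [Fintype U] in
lemma exists_of_item_arc_mem_arcs {Sets : ι → Finset U} {q : ℕ} {u : U} {y : Vtx U ι q}
    (h : (Vtx.item u, y) ∈ arcs Sets q) :
    ∃ i, y = Vtx.path i 0 ∧ u ∈ Sets i := by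
  simp only [arcs, AU, Ppath, Finset.mem_union, Finset.mem_biUnion, Finset.mem_image,
    Finset.mem_univ, true_and, Finset.mem_singleton, Prod.ext_iff, reduceCtorEq, false_and,
    exists_false, and_false, or_false, Vtx.item.injEq] at h
  obtain ⟨i, v, hv, rfl, rfl⟩ := h
  exact ⟨i, rfl, hv⟩

omit [Fintype U] in
lemma cases_of_path_arc_mem_arcs {Sets : ι → Finset U} {q : ℕ} {i : ι} {j : Fin (q + 1)}
    {y : Vtx U ι q} (h : (Vtx.path i j, y) ∈ arcs Sets q) :
    (∃ j' : Fin q, j = j'.castSucc ∧ y = Vtx.path i j'.succ) ∨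
      (j = Fin.last q ∧ y = Vtx.sink) := by
  simp only [arcs, AU, Ppath, Finset.mem_union, Finset.mem_biUnion, Finset.mem_univ,
    Finset.mem_image, Prod.ext_iff, reduceCtorEq, false_and, and_false, exists_false,
    Finset.union_singleton, Finset.mem_insert, Vtx.path.injEq, true_and, false_or] at h
  obtain ⟨a, ⟨⟨rfl, hj⟩, hy⟩ | ⟨j', ⟨rfl, hj⟩, hy⟩⟩ := h
  · exact Or.inr ⟨hj, hy⟩
  · exact Or.inl ⟨j', hj.symm, hy.symm⟩

omit [Fintype U] [Fintype ι] in
lemma mem_Ppath {q : ℕ} {i : ι} {a : Vtx U ι q × Vtx U ι q} :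
    a ∈ Ppath U ι q i ↔
      (∃ j : Fin q, a = (Vtx.path i j.castSucc, Vtx.path i j.succ)) ∨
        a = (Vtx.path i (Fin.last q), Vtx.sink) := by
  simp only [Ppath, Finset.mem_union, Finset.mem_image, Finset.mem_univ, true_and,
    Finset.mem_singleton, eq_comm]

omit [Fintype U] in
lemma path_suffix_subset_of_reaches_sink {Sets : ι → Finset U} {q : ℕ}
    {A' : Finset (Vtx U ι q × Vtx U ι q)} (hA' : A' ⊆ arcs Sets q) {i : ι} {j : Fin (q + 1)}
    (h : Reaches A' (Vtx.path i j) Vtx.sink) :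
    (∀ k : Fin q, j ≤ k.castSucc → (Vtx.path i k.castSucc, Vtx.path i k.succ) ∈ A') ∧
      (Vtx.path i (Fin.last q), Vtx.sink) ∈ A' := by
  generalize hx : Vtx.path i j = x at h
  induction h using Relation.ReflTransGen.head_induction_on generalizing j with
  | refl => cases hx
  | head hxc _ ih =>
    subst hx
    rcases cases_of_path_arc_mem_arcs (hA' hxc) with ⟨j', rfl, rfl⟩ | ⟨rfl, rfl⟩
    · obtain ⟨hnext, hlast⟩ := ih rfl
      refine ⟨fun k hk => ?_, hlast⟩
      rcases eq_or_ne k j' with rfl | hne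
      · exact hxc
      · refine hnext k ?_
        simp only [Fin.le_def, Fin.val_succ, Fin.val_castSucc] at hk ⊢
        omega
    · exact ⟨fun k hk => absurd hk (Fin.castSucc_lt_last k).not_ge, hxc⟩

omit [Fintype U] in
lemma Ppath_subset_of_reaches_sink {Sets : ι → Finset U} {q : ℕ}
    {A' : Finset (Vtx U ι q × Vtx U ι q)} (hA' : A' ⊆ arcs Sets q) {i : ι}
    (h : Reaches A' (Vtx.path i 0) Vtx.sink) :
    Ppath U ι q i ⊆ A' := by
  obtain ⟨hsteps, hlast⟩ := path_suffix_subset_of_reaches_sink hA' h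
  intro a ha
  rcases mem_Ppath.mp ha with ⟨k, rfl⟩ | rfl
  · exact hsteps k (Fin.zero_le _)
  · exact hlast

/-- In the graph `G` constructed from a Set Cover instance, if `A' ⊆ A` is feasible, then
`𝒞 := {S ∈ 𝒮 | P_S ⊆ A'}` is a set cover of `U`, i.e., every `u ∈ U` lies in some set
of `𝒞`. -/
theorem feasible_gives_cover (Sets : ι → Finset U) (q : ℕ)
    (A' : Finset (Vtx U ι q × Vtx U ι q)) (hA' : A' ⊆ arcs Sets q)
    (hfeas : Feasible A') :
    ∀ u : U, ∃ i ∈ Finset.univ.filter (fun i : ι => Ppath U ι q i ⊆ A'), u ∈ Sets i := by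
  intro u
  obtain ⟨x, hux, hx⟩ := (Relation.ReflTransGen.cases_head (hfeas u)).resolve_left (by simp)
  obtain ⟨i, rfl, hu⟩ := exists_of_item_arc_mem_arcs (hA' hux)
  exact ⟨i, Finset.mem_filter.mpr ⟨Finset.mem_univ i, Ppath_subset_of_reaches_sink hA' hx⟩, hu⟩
end

section
/- In the graph G constructed from a Set Cover instance, let 𝒞 ⊆ 𝒮 be a set cover of U (⋃_{S ∈ 𝒞} S = U) and let σ : U → 𝒞 be a choice function with u ∈ σ(u) for every u ∈ U. Then the arc set A' := {(v_u, v^0_{σ(u)}) | u ∈ U} ∪ ⋃_{S ∈ 𝒞} P_S is feasible, and {S ∈ 𝒮 | P_S ⊆ A'} = 𝒞. -/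
variable {U ι : Type} [Fintype U] [Fintype ι] [DecidableEq U] [DecidableEq ι]

lemma reach_path_aux {q : ℕ} (P : Finset (Vtx U ι q × Vtx U ι q)) (i : ι)
    (h : Ppath U ι q i ⊆ P) :
    ∀ m (j : Fin (q + 1)), q - j.val ≤ m → Reaches P (Vtx.path i j) Vtx.sink := by
  intro m
  induction m with
  | zero =>
    intro j hj
    have hjq : j = Fin.last q := by
      have := j.isLt
      apply Fin.ext
      simp only [Fin.val_last]
      omega
    subst hjq
    exact Relation.ReflTransGen.single (h (by simp [Ppath]))
  | succ m ih =>
    intro j hj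
    by_cases hq : j.val = q
    · have hjq : j = Fin.last q := Fin.ext hq
      subst hjq
      exact Relation.ReflTransGen.single (h (by simp [Ppath]))
    · have hlt : j.val < q := lt_of_le_of_ne (Nat.lt_succ_iff.mp j.isLt) hq
      have harc : (Vtx.path i j, Vtx.path i ((⟨j.val, hlt⟩ : Fin q).succ)) ∈ P := by
        apply h
        simp only [Ppath, Finset.mem_union, Finset.mem_image, Finset.mem_univ]
        left
        refine ⟨⟨j.val, hlt⟩, ?_⟩
        have : (⟨j.val, hlt⟩ : Fin q).castSucc = j := Fin.ext rfl
        rw [this]; exact ⟨trivial, rfl⟩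
      refine Relation.ReflTransGen.head harc (ih _ ?_)
      simp only [Fin.val_succ]
      omega

/-- In the graph `G` constructed from a Set Cover instance, let `𝒞 ⊆ 𝒮` be a set cover
of `U` and let `σ : U → 𝒞` be a choice function with `u ∈ σ(u)` for every `u ∈ U`.
Then `A' := {(v_u, v^0_{σ(u)}) | u ∈ U} ∪ ⋃_{S ∈ 𝒞} P_S` is feasible, and
`{S ∈ 𝒮 | P_S ⊆ A'} = 𝒞`. -/
theorem cover_gives_feasible (Sets : ι → Finset U) (q : ℕ) (𝒞 : Finset ι)
    (hcov : ∀ u : U, ∃ i ∈ 𝒞, u ∈ Sets i)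
    (σ : U → ι) (hσ𝒞 : ∀ u : U, σ u ∈ 𝒞) (hσ : ∀ u : U, u ∈ Sets (σ u))
    (A' : Finset (Vtx U ι q × Vtx U ι q))
    (hA' : A' = (Finset.univ.image fun u : U => (Vtx.item u, Vtx.path (σ u) 0)) ∪
      𝒞.biUnion (Ppath U ι q)) :
    Feasible A' ∧ Finset.univ.filter (fun i : ι => Ppath U ι q i ⊆ A') = 𝒞 := by
  have hsub : ∀ i ∈ 𝒞, Ppath U ι q i ⊆ A' := by
    intro i hi
    rw [hA']
    intro a ha
    exact Finset.mem_union_right _ (Finset.mem_biUnion.mpr ⟨i, hi, ha⟩)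
  constructor
  · intro u
    have h0 : (Vtx.item u, (Vtx.path (σ u) 0 : Vtx U ι q)) ∈ A' := by
      rw [hA']
      exact Finset.mem_union_left _ (Finset.mem_image.mpr ⟨u, Finset.mem_univ _, rfl⟩)
    exact Relation.ReflTransGen.head h0
      (reach_path_aux A' (σ u) (hsub _ (hσ𝒞 u)) q 0 (by simp))
  · ext i
    simp only [Finset.mem_filter, Finset.mem_univ, true_and]
    constructor
    · intro hi
      have : (Vtx.path i (Fin.last q), (Vtx.sink : Vtx U ι q)) ∈ A' :=
        hi (by simp [Ppath])
      rw [hA'] at this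
      rcases Finset.mem_union.mp this with h | h
      · obtain ⟨u, -, hu⟩ := Finset.mem_image.mp h
        exact absurd (congrArg Prod.fst hu) (by simp)
      · obtain ⟨j, hj, hmem⟩ := Finset.mem_biUnion.mp h
        simp only [Ppath, Finset.mem_union, Finset.mem_image, Finset.mem_univ,
          Finset.mem_singleton, Prod.mk.injEq] at hmem
        rcases hmem with ⟨k, -, -, hsnk⟩ | ⟨hij, -⟩
        · exact absurd hsnk (by simp)
        · obtain rfl : i = j := by
            injection hij with h1 h2
          exact hj
    · exact hsub i
end

section
/- In the graph G constructed from a Set Cover instance with q ≥ 1, for every subset A' ⊆ A and every linecard size k ≥ 1, the objective value satisfies obj_k(A') ≥ m · q · ⌈2/k⌉, where m := |{S ∈ 𝒮 | P_S ⊆ A'}|. -/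
variable {U ι : Type} [Fintype U] [Fintype ι] [DecidableEq U] [DecidableEq ι]

/-- In the graph `G` constructed from a Set Cover instance with `q ≥ 1`, for every subset
`A' ⊆ A` and every linecard size `k ≥ 1`, the objective value satisfies
`obj_k(A') ≥ m · q · ⌈2/k⌉`, where `m := |{S ∈ 𝒮 | P_S ⊆ A'}|`. -/
theorem obj_lower_bound (Sets : ι → Finset U) (q : ℕ) (hq : 1 ≤ q)
    (A' : Finset (Vtx U ι q × Vtx U ι q)) (hA' : A' ⊆ arcs Sets q)
    (k : ℕ) (hk : 1 ≤ k) :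
    (Finset.univ.filter fun i : ι => Ppath U ι q i ⊆ A').card * q * (2 ⌈/⌉ k) ≤
      obj k A' := by
  classical
  set F := Finset.univ.filter fun i : ι => Ppath U ι q i ⊆ A' with hF
  set T : Finset (Vtx U ι q) :=
    (F ×ˢ (Finset.univ : Finset (Fin q))).image fun p => Vtx.path p.1 p.2.succ with hT
  have hTcard : T.card = F.card * q := by
    rw [hT, Finset.card_image_of_injOn, Finset.card_product, Finset.card_univ, Fintype.card_fin]
    intro a _ b _ hab
    simp only [Vtx.path.injEq] at hab
    exact Prod.ext hab.1 (Fin.succ_injective _ hab.2)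
  have hdeg : ∀ v ∈ T, 2 ≤ deg A' v := by
    intro v hv
    rw [hT, Finset.mem_image] at hv
    obtain ⟨⟨i, j⟩, hmem, rfl⟩ := hv
    rw [Finset.mem_product, hF, Finset.mem_filter] at hmem
    have hP : Ppath U ι q i ⊆ A' := hmem.1.2
    -- in-arc
    have hin : (Vtx.path i j.castSucc, Vtx.path i j.succ) ∈ A' := by
      apply hP
      rw [Ppath, Finset.mem_union]
      exact Or.inl (Finset.mem_image.mpr ⟨j, Finset.mem_univ _, rfl⟩)
    -- out-arc
    have hout : ∃ w, ((Vtx.path i j.succ : Vtx U ι q), w) ∈ A' := by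
      by_cases h : (j : ℕ) + 1 < q
      · refine ⟨Vtx.path i (Fin.succ ⟨(j : ℕ) + 1, h⟩), hP ?_⟩
        rw [Ppath, Finset.mem_union]
        refine Or.inl (Finset.mem_image.mpr ⟨⟨(j : ℕ) + 1, h⟩, Finset.mem_univ _, ?_⟩)
        have hc : (Fin.castSucc ⟨(j : ℕ) + 1, h⟩ : Fin (q + 1)) = j.succ := by
          ext; simp
        rw [hc]
      · have hj : j.succ = Fin.last q := by
          have : (j : ℕ) + 1 = q := by omega
          ext
          simp [this]
        refine ⟨Vtx.sink, hP ?_⟩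
        rw [Ppath, Finset.mem_union, hj]
        exact Or.inr (Finset.mem_singleton_self _)
      
    obtain ⟨w, hw⟩ := hout
    rw [deg]
    dsimp only
    have h1 : 1 ≤ (A'.filter fun a => a.1 = Vtx.path i j.succ).card :=
      Finset.card_pos.mpr ⟨(Vtx.path i j.succ, w), by simp [Finset.mem_filter, hw]⟩
    have h2 : 1 ≤ (A'.filter fun a => a.2 = Vtx.path i j.succ).card :=
      Finset.card_pos.mpr ⟨(Vtx.path i j.castSucc, Vtx.path i j.succ),
        by simp [Finset.mem_filter, hin]⟩
    omega
  have hmono : ∀ v ∈ T, 2 ⌈/⌉ k ≤ deg A' v ⌈/⌉ k := by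
    intro v hv
    rw [Nat.ceilDiv_eq_add_pred_div, Nat.ceilDiv_eq_add_pred_div]
    exact Nat.div_le_div_right (by have := hdeg v hv; omega)
  calc F.card * q * (2 ⌈/⌉ k) = ∑ _v ∈ T, 2 ⌈/⌉ k := by
        rw [Finset.sum_const, smul_eq_mul, hTcard]
    _ ≤ ∑ v ∈ T, deg A' v ⌈/⌉ k := Finset.sum_le_sum hmono
    _ ≤ ∑ v : Vtx U ι q, deg A' v ⌈/⌉ k :=
        Finset.sum_le_sum_of_subset (Finset.subset_univ T)
    _ = obj k A' := rfl
end

section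
/- In the graph G constructed from a Set Cover instance with q > 2 · (|𝒮| + Σ_{S ∈ 𝒮} |S|), let k ≥ 1, let A' ⊆ A be feasible with m' := |{S ∈ 𝒮 | P_S ⊆ A'}|, and let 𝒞 ⊆ 𝒮 be a set cover of U with |𝒞| < m', with choice function σ : U → 𝒞 (u ∈ σ(u)) and corresponding arc set A'' := {(v_u, v^0_{σ(u)}) | u ∈ U} ∪ ⋃_{S ∈ 𝒞} P_S. Then obj_k(A'') < obj_k(A'). -/
variable {U ι : Type} [Fintype U] [Fintype ι] [DecidableEq U] [DecidableEq ι]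

/-!
Each of the vertices `v^1_S, …, v^q_S` of a path `P_S` contained in an arc set has degree at
least `2`, so costs at least `⌈2/k⌉`; hence `obj_k(A') ≥ m' q ⌈2/k⌉`. In `A''`, charge `⌈2/k⌉`
to each of the `|𝒞| q` such vertices and bound every other excess by the degree itself
(`⌈d/k⌉ ≤ d`); the handshake identity `Σ_v deg(v) = 2|A''| ≤ 2(|U| + |𝒞| (q + 1))` then gives
`obj_k(A'') ≤ |𝒞| q ⌈2/k⌉ + 2(|U| + |𝒞|)`. Since `m' > |𝒞|`, the gap is at least
`q ⌈2/k⌉ - 2(|U| + |𝒞|) > 0` by the choice of `q`.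
-/

open Finset

section Degree

variable {α : Type} [DecidableEq α]

theorem sum_deg [Fintype α] (B : Finset (α × α)) : ∑ v, deg B v = 2 * #B := by
  have fst := card_eq_sum_card_fiberwise (f := Prod.fst) (s := B) (t := univ) fun _ _ ↦ mem_univ _
  have snd := card_eq_sum_card_fiberwise (f := Prod.snd) (s := B) (t := univ) fun _ _ ↦ mem_univ _
  simp only [deg, sum_add_distrib, ← fst, ← snd]
  ring

theorem two_le_deg {B : Finset (α × α)} {a v b : α} (hin : (a, v) ∈ B) (hout : (v, b) ∈ B) :
    2 ≤ deg B v := by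
  have h₁ : 0 < #(B.filter fun e ↦ e.1 = v) := card_pos.2 ⟨_, mem_filter.2 ⟨hout, rfl⟩⟩
  have h₂ : 0 < #(B.filter fun e ↦ e.2 = v) := card_pos.2 ⟨_, mem_filter.2 ⟨hin, rfl⟩⟩
  unfold deg
  omega

end Degree

section CeilDiv

variable {k : ℕ}

theorem Nat.ceilDiv_le_self (hk : 1 ≤ k) (d : ℕ) : d ⌈/⌉ k ≤ d :=
  (ceilDiv_le_iff_le_mul hk).2 (Nat.le_mul_of_pos_left d hk)

theorem Nat.ceilDiv_add_two_le (hk : 1 ≤ k) {d : ℕ} (hd : 2 ≤ d) :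
    d ⌈/⌉ k + 2 ≤ 2 ⌈/⌉ k + d := by
  have h₂ : 2 ≤ k * (2 ⌈/⌉ k) := (ceilDiv_le_iff_le_mul hk).1 le_rfl
  have hd' : d - 2 ≤ k * (d - 2) := Nat.le_mul_of_pos_left _ hk
  have : d ⌈/⌉ k ≤ 2 ⌈/⌉ k + (d - 2) := (ceilDiv_le_iff_le_mul hk).2 (by rw [mul_add]; omega)
  omega

end CeilDiv

section Objective

variable {α : Type} [Fintype α] [DecidableEq α] {k : ℕ} {B : Finset (α × α)} {I : Finset α}

theorem obj_add_le (hk : 1 ≤ k) (hI : ∀ v ∈ I, 2 ≤ deg B v) :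
    obj k B + 2 * #I ≤ #I * (2 ⌈/⌉ k) + 2 * #B := by
  have key : ∀ v, deg B v ⌈/⌉ k + (if v ∈ I then 2 else 0) ≤
      (if v ∈ I then 2 ⌈/⌉ k else 0) + deg B v := by
    intro v
    split_ifs with hv
    · exact Nat.ceilDiv_add_two_le hk (hI v hv)
    · simpa using Nat.ceilDiv_le_self hk (deg B v)
  calc obj k B + 2 * #I = ∑ v, (deg B v ⌈/⌉ k + if v ∈ I then 2 else 0) := by
        simp [obj, sum_add_distrib, sum_ite_mem, mul_comm]
    _ ≤ ∑ v, ((if v ∈ I then 2 ⌈/⌉ k else 0) + deg B v) := sum_le_sum fun v _ ↦ key v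
    _ = #I * (2 ⌈/⌉ k) + 2 * #B := by
        simp [sum_add_distrib, sum_ite_mem, sum_deg]

theorem card_mul_le_obj (hk : 1 ≤ k) (hI : ∀ v ∈ I, 2 ≤ deg B v) :
    #I * (2 ⌈/⌉ k) ≤ obj k B :=
  calc #I * (2 ⌈/⌉ k) = ∑ _v ∈ I, 2 ⌈/⌉ k := by simp
    _ ≤ ∑ v ∈ I, deg B v ⌈/⌉ k :=
        sum_le_sum fun v hv ↦ (gc_mul_ceilDiv hk).monotone_l (hI v hv)
    _ ≤ obj k B := sum_le_sum_of_subset (subset_univ I)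

end Objective

section Paths

variable {U ι : Type} [DecidableEq U] [DecidableEq ι] {q : ℕ}

theorem card_Ppath_le (i : ι) : #(Ppath U ι q i) ≤ q + 1 :=
  (card_union_le _ _).trans (by simpa using card_image_le (s := (univ : Finset (Fin q))))

theorem exists_out_arc_mem_Ppath (i : ι) (t : Fin (q + 1)) :
    ∃ w, ((Vtx.path i t : Vtx U ι q), w) ∈ Ppath U ι q i := by
  induction t using Fin.lastCases with
  | last => exact ⟨.sink, by simp [Ppath]⟩
  | cast j => exact ⟨.path i j.succ, by simp [Ppath]⟩

theorem path_castSucc_succ_mem_Ppath (i : ι) (j : Fin q) :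
    ((Vtx.path i j.castSucc : Vtx U ι q), Vtx.path i j.succ) ∈ Ppath U ι q i := by
  simp [Ppath]

/-- The vertices `v^1_S, …, v^q_S` of the paths `P_S`, `S ∈ s`. -/
def interiorVertices (s : Finset ι) : Finset (Vtx U ι q) :=
  (s ×ˢ univ).image fun p : ι × Fin q ↦ .path p.1 p.2.succ

theorem card_interiorVertices (s : Finset ι) :
    #(interiorVertices (U := U) (q := q) s) = #s * q := by
  rw [interiorVertices, card_image_of_injective, card_product, card_univ, Fintype.card_fin]
  rintro ⟨i, j⟩ ⟨i', j'⟩ h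
  simp_all

theorem two_le_deg_of_mem_interiorVertices {B : Finset (Vtx U ι q × Vtx U ι q)} {s : Finset ι}
    (hs : ∀ i ∈ s, Ppath U ι q i ⊆ B) : ∀ v ∈ interiorVertices s, 2 ≤ deg B v := by
  simp only [interiorVertices, mem_image, mem_product, mem_univ, and_true]
  rintro _ ⟨⟨i, j⟩, hi, rfl⟩
  obtain ⟨w, hw⟩ := exists_out_arc_mem_Ppath (U := U) i j.succ
  exact two_le_deg (hs i hi (path_castSucc_succ_mem_Ppath i j)) (hs i hi hw)

end Paths

theorem smaller_cover_gives_smaller_obj_general (Sets : ι → Finset U) (q : ℕ)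
    (hq : q > 2 * (Fintype.card ι + ∑ i : ι, (Sets i).card))
    (k : ℕ) (hk : 1 ≤ k)
    (A' : Finset (Vtx U ι q × Vtx U ι q))
    (𝒞 : Finset ι)
    (hlt : 𝒞.card < (Finset.univ.filter fun i : ι => Ppath U ι q i ⊆ A').card)
    (σ : U → ι) (hσ : ∀ u : U, u ∈ Sets (σ u))
    (A'' : Finset (Vtx U ι q × Vtx U ι q))
    (hA'' : A'' = (Finset.univ.image fun u : U => (Vtx.item u, Vtx.path (σ u) 0)) ∪
      𝒞.biUnion (Ppath U ι q)) :
    obj k A'' < obj k A' := by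
  set M := univ.filter fun i : ι ↦ Ppath U ι q i ⊆ A'
  set c := 2 ⌈/⌉ k
  have hU : Fintype.card U ≤ ∑ i, #(Sets i) :=
    (card_le_card fun u _ ↦ mem_biUnion.2 ⟨σ u, mem_univ _, hσ u⟩).trans card_biUnion_le
  have h𝒞 : #𝒞 ≤ Fintype.card ι := card_le_univ 𝒞
  have hc : 1 ≤ c := Nat.pos_of_ne_zero fun h ↦ by
    simpa [h] using (ceilDiv_le_iff_le_mul hk).1 (le_refl c)
  have hA''card : #A'' ≤ Fintype.card U + #𝒞 * (q + 1) := by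
    rw [hA'']
    refine (card_union_le _ _).trans (add_le_add card_image_le ?_)
    exact card_biUnion_le.trans <| by
      simpa using sum_le_sum fun i (_ : i ∈ 𝒞) ↦ card_Ppath_le (U := U) (q := q) i
  have hA''obj := obj_add_le hk <| two_le_deg_of_mem_interiorVertices (B := A'') (s := 𝒞)
    fun i hi ↦ hA'' ▸ subset_union_right.trans' (subset_biUnion_of_mem _ hi)
  have hA'obj := card_mul_le_obj hk <| two_le_deg_of_mem_interiorVertices (B := A') (s := M)
    fun i hi ↦ (mem_filter.1 hi).2
  rw [card_interiorVertices] at hA''obj hA'obj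
  have hM : (#𝒞 + 1) * q * c ≤ #M * q * c := by gcongr; exact hlt
  nlinarith

/-- In the graph `G` constructed from a Set Cover instance with
`q > 2 · (|𝒮| + Σ_{S ∈ 𝒮} |S|)`, let `k ≥ 1`, let `A' ⊆ A` be feasible with
`m' := |{S ∈ 𝒮 | P_S ⊆ A'}|`, and let `𝒞 ⊆ 𝒮` be a set cover of `U` with `|𝒞| < m'`,
with choice function `σ : U → 𝒞` (`u ∈ σ(u)`) and corresponding arc set
`A'' := {(v_u, v^0_{σ(u)}) | u ∈ U} ∪ ⋃_{S ∈ 𝒞} P_S`. Then `obj_k(A'') < obj_k(A')`. -/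
theorem smaller_cover_gives_smaller_obj (Sets : ι → Finset U) (q : ℕ)
    (hq : q > 2 * (Fintype.card ι + ∑ i : ι, (Sets i).card))
    (k : ℕ) (hk : 1 ≤ k)
    (A' : Finset (Vtx U ι q × Vtx U ι q)) (hA' : A' ⊆ arcs Sets q) (hfeas : Feasible A')
    (𝒞 : Finset ι) (hcov : ∀ u : U, ∃ i ∈ 𝒞, u ∈ Sets i)
    (hlt : 𝒞.card < (Finset.univ.filter fun i : ι => Ppath U ι q i ⊆ A').card)
    (σ : U → ι) (hσ𝒞 : ∀ u : U, σ u ∈ 𝒞) (hσ : ∀ u : U, u ∈ Sets (σ u))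
    (A'' : Finset (Vtx U ι q × Vtx U ι q))
    (hA'' : A'' = (Finset.univ.image fun u : U => (Vtx.item u, Vtx.path (σ u) 0)) ∪
      𝒞.biUnion (Ppath U ι q)) :
    obj k A'' < obj k A' :=
  smaller_cover_gives_smaller_obj_general Sets q hq k hk A' 𝒞 hlt σ hσ A'' hA''
end

section
/- In the graph G constructed from a Set Cover instance with ⋃_{S ∈ 𝒮} S = U and q > 2 · (|𝒮| + Σ_{S ∈ 𝒮} |S|), for every linecard size k ≥ 1, the minimum of |{S ∈ 𝒮 | P_S ⊆ A'}| over all feasible subsets A' ⊆ A equals the minimum size of a set cover of U, i.e., min{|𝒞| : 𝒞 ⊆ 𝒮, ⋃_{S ∈ 𝒞} S = U}. -/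
variable {U ι : Type} [Fintype U] [Fintype ι] [DecidableEq U] [DecidableEq ι]

/-! From `v^j_S` the only arc of `G` leads on along `P_S`. Hence if `v_u` reaches `z` in `A'`,
then `A'` contains all of `P_S` for some `S ∋ u`, so the active sets `{S | P_S ⊆ A'}` of a
feasible `A'` cover `U`. Conversely `A_U` together with the paths of a cover `𝒞` is feasible,
with exactly `𝒞` active. So both minima are taken over the same set of numbers. -/

section SetCoverGraph

variable {U ι : Type} {q : ℕ}

/-- The head of the arc of `P_{S_i}` leaving `v^j_{S_i}`. -/
def Vtx.next (i : ι) (j : Fin (q + 1)) : Vtx U ι q :=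
  Fin.lastCases Vtx.sink (fun m => Vtx.path i m.succ) j

@[simp]
lemma Vtx.next_castSucc (i : ι) (m : Fin q) :
    (Vtx.next i m.castSucc : Vtx U ι q) = Vtx.path i m.succ := by
  simp [Vtx.next]

@[simp]
lemma Vtx.next_last (i : ι) : (Vtx.next i (Fin.last q) : Vtx U ι q) = Vtx.sink := by
  simp [Vtx.next]

variable [DecidableEq U] [DecidableEq ι]

lemma mem_Ppath_iff {i : ι} {a b : Vtx U ι q} :
    (a, b) ∈ Ppath U ι q i ↔ ∃ j, a = Vtx.path i j ∧ b = Vtx.next i j := by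
  simp [Ppath, Fin.exists_fin_succ', Prod.ext_iff, eq_comm, or_comm]

lemma path_mem_Ppath (i : ι) (j : Fin (q + 1)) :
    (Vtx.path i j, Vtx.next i j) ∈ Ppath U ι q i :=
  mem_Ppath_iff.2 ⟨j, rfl, rfl⟩

lemma reaches_of_Ppath_subset {A' : Finset (Vtx U ι q × Vtx U ι q)} {i : ι}
    (h : Ppath U ι q i ⊆ A') (j : Fin (q + 1)) : Reaches A' (Vtx.path i j) Vtx.sink := by
  induction j using Fin.reverseInduction with
  | last => exact .single (by simpa using h (path_mem_Ppath i (Fin.last q)))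
  | cast m hm =>
    exact .head (by simpa using h (path_mem_Ppath i m.castSucc)) hm

variable [Fintype ι] {Sets : ι → Finset U} {A' : Finset (Vtx U ι q × Vtx U ι q)}

lemma mem_AU_iff {a b : Vtx U ι q} :
    (a, b) ∈ AU Sets q ↔ ∃ i, ∃ u ∈ Sets i, a = Vtx.item u ∧ b = Vtx.path i 0 := by
  simp [AU, Prod.ext_iff, eq_comm]

lemma item_mem_arcs_iff {u : U} {b : Vtx U ι q} :
    (Vtx.item u, b) ∈ arcs Sets q ↔ ∃ i, u ∈ Sets i ∧ b = Vtx.path i 0 := by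
  simp [arcs, mem_AU_iff, mem_Ppath_iff]

lemma eq_next_of_path_mem_arcs {i : ι} {j : Fin (q + 1)} {b : Vtx U ι q}
    (h : (Vtx.path i j, b) ∈ arcs Sets q) : b = Vtx.next i j := by
  simp only [arcs, Finset.mem_union, Finset.mem_biUnion, Finset.mem_univ, true_and,
    mem_AU_iff, mem_Ppath_iff] at h
  rcases h with ⟨_, _, _, h, _⟩ | ⟨_, _, h, rfl⟩
  · cases h
  · cases h
    rfl

lemma Reaches.head_path (hA : A' ⊆ arcs Sets q) {i : ι} {j : Fin (q + 1)}
    (h : Reaches A' (Vtx.path i j) Vtx.sink) :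
    (Vtx.path i j, Vtx.next i j) ∈ A' ∧ Reaches A' (Vtx.next i j) Vtx.sink := by
  obtain h | ⟨b, hb, hrest⟩ := Relation.ReflTransGen.cases_head h
  · cases h
  · obtain rfl := eq_next_of_path_mem_arcs (hA hb)
    exact ⟨hb, hrest⟩

lemma Ppath_subset_of_reaches (hA : A' ⊆ arcs Sets q) {i : ι}
    (h : Reaches A' (Vtx.path i 0) Vtx.sink) : Ppath U ι q i ⊆ A' := by
  have hreach : ∀ j, Reaches A' (Vtx.path i j) Vtx.sink :=
    Fin.induction h fun m hm => by simpa using (hm.head_path hA).2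
  rintro ⟨a, b⟩ hab
  obtain ⟨j, rfl, rfl⟩ := mem_Ppath_iff.1 hab
  exact ((hreach j).head_path hA).1

def activeSets (A' : Finset (Vtx U ι q × Vtx U ι q)) : Finset ι :=
  Finset.univ.filter fun i => Ppath U ι q i ⊆ A'

lemma activeSets_covers_of_feasible (hA : A' ⊆ arcs Sets q) (hF : Feasible A') (u : U) :
    ∃ i ∈ activeSets A', u ∈ Sets i := by
  obtain h | ⟨b, hb, hrest⟩ := Relation.ReflTransGen.cases_head (hF u)
  · cases h
  · obtain ⟨i, hu, rfl⟩ := item_mem_arcs_iff.1 (hA hb)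
    exact ⟨i, Finset.mem_filter.2 ⟨Finset.mem_univ i, Ppath_subset_of_reaches hA hrest⟩, hu⟩

def coverArcs (Sets : ι → Finset U) (q : ℕ) (𝒞 : Finset ι) : Finset (Vtx U ι q × Vtx U ι q) :=
  AU Sets q ∪ 𝒞.biUnion (Ppath U ι q)

lemma coverArcs_subset_arcs (𝒞 : Finset ι) : coverArcs Sets q 𝒞 ⊆ arcs Sets q :=
  Finset.union_subset_union_right
    (Finset.biUnion_subset_biUnion_of_subset_left _ (Finset.subset_univ _))

lemma Ppath_subset_coverArcs_iff {𝒞 : Finset ι} {i : ι} :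
    Ppath U ι q i ⊆ coverArcs Sets q 𝒞 ↔ i ∈ 𝒞 := by
  refine ⟨fun h => ?_, fun h => (Finset.subset_biUnion_of_mem _ h).trans
    Finset.subset_union_right⟩
  have hsink := h (path_mem_Ppath i (Fin.last q))
  simp only [coverArcs, Finset.mem_union, Finset.mem_biUnion, mem_AU_iff, mem_Ppath_iff]
    at hsink
  rcases hsink with ⟨_, _, _, h, _⟩ | ⟨i', hi', _, h, _⟩
  · cases h
  · cases h
    exact hi'

lemma activeSets_coverArcs (𝒞 : Finset ι) : activeSets (coverArcs Sets q 𝒞) = 𝒞 := by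
  ext i
  simp [activeSets, Ppath_subset_coverArcs_iff]

lemma feasible_coverArcs {𝒞 : Finset ι} (h𝒞 : ∀ u : U, ∃ i ∈ 𝒞, u ∈ Sets i) :
    Feasible (coverArcs Sets q 𝒞) := by
  intro u
  obtain ⟨i, hi, hu⟩ := h𝒞 u
  refine .head ?_ (reaches_of_Ppath_subset (Ppath_subset_coverArcs_iff.2 hi) 0)
  exact Finset.mem_union_left _ (mem_AU_iff.2 ⟨i, u, hu, rfl, rfl⟩)

end SetCoverGraph

theorem min_active_paths_eq_min_cover_general (Sets : ι → Finset U) (q : ℕ) :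
    ∀ k : ℕ, 1 ≤ k →
      sInf {n : ℕ | ∃ A' ⊆ arcs Sets q, Feasible A' ∧
          n = (Finset.univ.filter fun i : ι => Ppath U ι q i ⊆ A').card}
        = sInf {n : ℕ | ∃ 𝒞 : Finset ι, (∀ u : U, ∃ i ∈ 𝒞, u ∈ Sets i) ∧ n = 𝒞.card} := by
  intro _ _
  congr 1
  ext n
  constructor
  · rintro ⟨A', hA, hF, rfl⟩
    exact ⟨activeSets A', activeSets_covers_of_feasible hA hF, rfl⟩
  · rintro ⟨𝒞, h𝒞, rfl⟩
    refine ⟨coverArcs Sets q 𝒞, coverArcs_subset_arcs 𝒞, feasible_coverArcs h𝒞, ?_⟩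
    exact congrArg Finset.card (activeSets_coverArcs 𝒞).symm

/-- In the graph `G` constructed from a Set Cover instance with `⋃_{S ∈ 𝒮} S = U` and
`q > 2 · (|𝒮| + Σ_{S ∈ 𝒮} |S|)`, for every linecard size `k ≥ 1`, the minimum of
`|{S ∈ 𝒮 | P_S ⊆ A'}|` over all feasible subsets `A' ⊆ A` equals the minimum size of a
set cover of `U`. -/
theorem min_active_paths_eq_min_cover (Sets : ι → Finset U) (q : ℕ)
    (hU : ∀ u : U, ∃ i : ι, u ∈ Sets i)
    (hq : q > 2 * (Fintype.card ι + ∑ i : ι, (Sets i).card)) :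
    ∀ k : ℕ, 1 ≤ k →
      sInf {n : ℕ | ∃ A' ⊆ arcs Sets q, Feasible A' ∧
          n = (Finset.univ.filter fun i : ι => Ppath U ι q i ⊆ A').card}
        = sInf {n : ℕ | ∃ 𝒞 : Finset ι, (∀ u : U, ∃ i ∈ 𝒞, u ∈ Sets i) ∧ n = 𝒞.card} :=
  min_active_paths_eq_min_cover_general Sets q
end

section
/- Flow feasibility equals path feasibility in the constructed graph: In the graph G constructed from a Set Cover instance, equip each arc a ∈ A_U with capacity cp(a) = 1 and each arc a ∈ A_𝒮 with capacity cp(a) = |U|. For every subset A' ⊆ A, the following are equivalent: (i) there exists a family of nonnegative rational flows (f_u)_{u ∈ U}, each f_u : A → ℚ≥0 supported on A', such that each f_u satisfies flow conservation at every vertex other than v_u and z and routes one unit of flow from v_u to z, and Σ_{u ∈ U} f_u(a) ≤ cp(a) for every arc a ∈ A; (ii) for every u ∈ U there is a directed path from v_u to z all of whose arcs lie in A'. -/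
variable {U ι : Type} [Fintype U] [Fintype ι] [DecidableEq U] [DecidableEq ι]

/-- The capacity function: arcs of `A_U` have capacity `1`, arcs of `A_𝒮` have
capacity `|U|`. -/
noncomputable def cp (Sets : ι → Finset U) (q : ℕ) (a : Vtx U ι q × Vtx U ι q) : ℚ :=
  if a ∈ AU Sets q then 1 else (Fintype.card U : ℚ)

open Finset Function Relation

section Flow

variable {α R : Type*} [Fintype α] [DecidableEq α]

lemma sum_netOutflow_eq_cut [AddCommGroup R] (f : α → α → R) (S : Finset α) :
    ∑ v ∈ S, (∑ w, f v w - ∑ w, f w v) =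
      ∑ v ∈ S, ∑ w ∈ Sᶜ, f v w - ∑ v ∈ S, ∑ w ∈ Sᶜ, f w v := by
  simp only [← sum_add_sum_compl S, sum_sub_distrib, sum_add_distrib]
  rw [sum_comm (s := S) (t := S) (f := fun v w => f w v)]
  abel

theorem reflTransGen_of_netOutflow_pos [AddCommGroup R] [LinearOrder R] [IsOrderedAddMonoid R]
    (f : α → α → R) (hf : ∀ x y, 0 ≤ f x y) {s t : α}
    (hcons : ∀ v, v ≠ s → v ≠ t → ∑ w, f w v = ∑ w, f v w)
    (hs : 0 < ∑ w, f s w - ∑ w, f w s) :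
    ReflTransGen (fun x y => 0 < f x y) s t := by
  classical
  by_contra hst
  set S := univ.filter (ReflTransGen (fun x y => 0 < f x y) s)
  have hsS : s ∈ S := mem_filter.mpr ⟨mem_univ s, .refl⟩
  have hnet : ∑ v ∈ S, (∑ w, f v w - ∑ w, f w v) = ∑ w, f s w - ∑ w, f w s := by
    refine sum_eq_single_of_mem s hsS fun v hv hvs => ?_
    have hvt : v ≠ t := by rintro rfl; exact hst (mem_filter.mp hv).2
    rw [hcons v hvs hvt, sub_self]
  have hout : ∑ v ∈ S, ∑ w ∈ Sᶜ, f v w = 0 := by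
    refine sum_eq_zero fun v hv => sum_eq_zero fun w hw => ?_
    refine ((hf v w).eq_of_not_lt fun hvw => mem_compl.mp hw ?_).symm
    exact mem_filter.mpr ⟨mem_univ w, (mem_filter.mp hv).2.tail hvw⟩
  have hin : 0 ≤ ∑ v ∈ S, ∑ w ∈ Sᶜ, f w v := sum_nonneg fun v _ => sum_nonneg fun w _ => hf w v
  have hs' : ∑ w, f s w - ∑ w, f w s ≤ 0 := by
    rw [← hnet, sum_netOutflow_eq_cut, hout, zero_sub]
    exact neg_nonpos.mpr hin
  exact absurd hs (not_lt.mpr hs')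

end Flow

section PathFlow

variable {α R : Type*} {n : ℕ} {p : Fin (n + 1) → α}

def pathFlow [DecidableEq α] [Zero R] [One R] (p : Fin (n + 1) → α) (x y : α) : R :=
  if ∃ k : Fin n, p k.castSucc = x ∧ p k.succ = y then 1 else 0

lemma exists_castSucc_eq_iff (hp : Injective p) {v : α} :
    (∃ k : Fin n, p k.castSucc = v) ↔ v ∈ Set.range p ∧ v ≠ p (Fin.last n) := by
  constructor
  · rintro ⟨k, rfl⟩
    exact ⟨⟨_, rfl⟩, fun h => Fin.castSucc_ne_last k (hp h)⟩
  · rintro ⟨⟨j, rfl⟩, hj⟩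
    obtain ⟨k, rfl⟩ := Fin.exists_castSucc_eq.mpr fun h => hj (congrArg p h)
    exact ⟨k, rfl⟩

lemma exists_succ_eq_iff (hp : Injective p) {v : α} :
    (∃ k : Fin n, p k.succ = v) ↔ v ∈ Set.range p ∧ v ≠ p 0 := by
  constructor
  · rintro ⟨k, rfl⟩
    exact ⟨⟨_, rfl⟩, fun h => Fin.succ_ne_zero k (hp h)⟩
  · rintro ⟨⟨j, rfl⟩, hj⟩
    obtain ⟨k, rfl⟩ := Fin.exists_succ_eq.mpr fun h => hj (congrArg p h)
    exact ⟨k, rfl⟩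

variable [DecidableEq α]

lemma pathFlow_nonneg [Zero R] [One R] [Preorder R] [ZeroLEOneClass R] (x y : α) :
    0 ≤ (pathFlow p x y : R) := by
  unfold pathFlow; split_ifs <;> simp

lemma pathFlow_le_one [Zero R] [One R] [Preorder R] [ZeroLEOneClass R] (x y : α) :
    (pathFlow p x y : R) ≤ 1 := by
  unfold pathFlow; split_ifs <;> simp

lemma pathFlow_eq_zero_of_notMem_range [Zero R] [One R] {x : α} (hx : x ∉ Set.range p) (y : α) :
    (pathFlow p x y : R) = 0 :=
  if_neg fun ⟨_, hk, _⟩ => hx ⟨_, hk⟩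

lemma pathFlow_eq_zero_of_notMem [Zero R] [One R] {A : Finset (α × α)}
    (hA : ∀ k : Fin n, (p k.castSucc, p k.succ) ∈ A) {x y : α} (hxy : (x, y) ∉ A) :
    (pathFlow p x y : R) = 0 :=
  if_neg fun ⟨k, hx, hy⟩ => hxy (hx ▸ hy ▸ hA k)

variable [Fintype α] [AddCommMonoidWithOne R]

lemma sum_ite_exists_eq_and_eq {κ : Type*} [Fintype κ] {g : κ → α} (h : κ → α)
    (hg : Injective g) (v : α) :
    ∑ w, (if ∃ k, g k = v ∧ h k = w then (1 : R) else 0) = if ∃ k, g k = v then 1 else 0 := by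
  split_ifs with hv
  · obtain ⟨k, rfl⟩ := hv
    have hiff : ∀ w, (∃ k', g k' = g k ∧ h k' = w) ↔ h k = w := fun w =>
      ⟨fun ⟨k', hk', hw⟩ => hg hk' ▸ hw, fun hw => ⟨k, rfl, hw⟩⟩
    simp only [hiff, sum_ite_eq, mem_univ, if_true]
  · exact sum_eq_zero fun w _ => if_neg fun ⟨k, hk, _⟩ => hv ⟨k, hk⟩

lemma sum_pathFlow_out (hp : Injective p) (v : α) :
    ∑ w, (pathFlow p v w : R) = if v ∈ Set.range p ∧ v ≠ p (Fin.last n) then 1 else 0 := by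
  simp only [pathFlow, ← exists_castSucc_eq_iff hp]
  convert sum_ite_exists_eq_and_eq (R := R) (g := fun k : Fin n => p k.castSucc) _
    (hp.comp (Fin.castSucc_injective n)) v

lemma sum_pathFlow_in (hp : Injective p) (v : α) :
    ∑ w, (pathFlow p w v : R) = if v ∈ Set.range p ∧ v ≠ p 0 then 1 else 0 := by
  have hswap : ∀ w, (∃ k : Fin n, p k.castSucc = w ∧ p k.succ = v) ↔
      ∃ k : Fin n, p k.succ = v ∧ p k.castSucc = w := fun w => exists_congr fun k => and_comm
  simp only [pathFlow, hswap, ← exists_succ_eq_iff hp]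
  convert sum_ite_exists_eq_and_eq (R := R) (g := fun k : Fin n => p k.succ) _
    (hp.comp (Fin.succ_injective n)) v

lemma sum_pathFlow_in_eq_out (hp : Injective p) {v : α} (h₀ : v ≠ p 0)
    (hn : v ≠ p (Fin.last n)) : ∑ w, (pathFlow p w v : R) = ∑ w, pathFlow p v w := by
  simp [sum_pathFlow_in hp, sum_pathFlow_out hp, h₀, hn]

lemma netOutflow_pathFlow_source {R : Type*} [AddCommGroupWithOne R] [NeZero n]
    (hp : Injective p) : ∑ w, (pathFlow p (p 0) w : R) - ∑ w, pathFlow p w (p 0) = 1 := by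
  simp [sum_pathFlow_in hp, sum_pathFlow_out hp, hp.ne Fin.last_pos'.ne]

lemma netInflow_pathFlow_target {R : Type*} [AddCommGroupWithOne R] [NeZero n]
    (hp : Injective p) :
    ∑ w, (pathFlow p w (p (Fin.last n)) : R) - ∑ w, pathFlow p (p (Fin.last n)) w = 1 := by
  simp [sum_pathFlow_in hp, sum_pathFlow_out hp, hp.ne Fin.last_pos'.ne']

end PathFlow

namespace Vtx

variable {Sets : ι → Finset U} {q : ℕ} {A' : Finset (Vtx U ι q × Vtx U ι q)} {u : U} {i : ι}

section

omit [Fintype U]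

lemma eq_path_zero_of_item_mem_arcs {w : Vtx U ι q} (h : (item u, w) ∈ arcs Sets q) :
    ∃ i, w = path i 0 := by
  simp only [arcs, AU, Ppath, mem_union, mem_biUnion, mem_image, mem_univ, true_and,
    mem_singleton, Prod.ext_iff] at h
  rcases h with ⟨i, u', -, -, rfl⟩ | ⟨i, ⟨j, h, -⟩ | ⟨h, -⟩⟩
  · exact ⟨i, rfl⟩
  all_goals simp at h

lemma eq_of_path_mem_arcs {j : Fin (q + 1)} {w : Vtx U ι q} (h : (path i j, w) ∈ arcs Sets q) :
    (∃ k : Fin q, j = k.castSucc ∧ w = path i k.succ) ∨ (j = Fin.last q ∧ w = sink) := by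
  simp only [arcs, AU, Ppath, mem_union, mem_biUnion, mem_image, mem_univ, true_and,
    mem_singleton, Prod.ext_iff] at h
  rcases h with ⟨i', u', -, h, -⟩ | ⟨i', ⟨k, h, rfl⟩ | ⟨h, rfl⟩⟩
  · simp at h
  · obtain ⟨rfl, rfl⟩ := path.inj h
    exact .inl ⟨k, rfl, rfl⟩
  · obtain ⟨rfl, rfl⟩ := path.inj h
    exact .inr ⟨rfl, rfl⟩

lemma path_arcs_mem_of_reaches (hA' : A' ⊆ arcs Sets q) {j : Fin (q + 1)}
    (h : Reaches A' (path i j) sink) :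
    (∀ k : Fin q, j ≤ k.castSucc → (path i k.castSucc, path i k.succ) ∈ A') ∧
      (path i (Fin.last q), sink) ∈ A' := by
  generalize hx : path i j = x at h
  induction h using ReflTransGen.head_induction_on generalizing j with
  | refl => cases hx
  | head hxy _ ih =>
    subst hx
    rcases eq_of_path_mem_arcs (hA' hxy) with ⟨k₀, rfl, rfl⟩ | ⟨rfl, rfl⟩
    · obtain ⟨hrest, hlast⟩ := ih rfl
      refine ⟨fun k hk => ?_, hlast⟩
      rcases hk.eq_or_lt with hk | hk
      · rwa [Fin.castSucc_inj.mp hk] at hxy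
      · exact hrest k (Fin.castSucc_lt_iff_succ_le.mp hk)
    · exact ⟨fun k hk => absurd hk (not_le.mpr (Fin.castSucc_lt_last k)), hxy⟩

section

omit [Fintype ι] [DecidableEq U] [DecidableEq ι]

/-- `v_u → v^0_{S_i} → v^1_{S_i} → ⋯ → v^q_{S_i} → z`. -/
def canonicalPath (u : U) (i : ι) : Fin (q + 3) → Vtx U ι q :=
  Fin.cons (item u) (Fin.snoc (α := fun _ => Vtx U ι q) (path i) sink)

@[simp] lemma canonicalPath_zero : canonicalPath (q := q) u i 0 = item u := rfl

@[simp] lemma canonicalPath_last : canonicalPath (q := q) u i (Fin.last (q + 2)) = sink := by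
  rw [canonicalPath, ← Fin.succ_last, Fin.cons_succ, Fin.snoc_last]

lemma item_notMem_range_snoc_path :
    item u ∉ Set.range (Fin.snoc (α := fun _ => Vtx U ι q) (path i) sink) := by
  rintro ⟨k, hk⟩
  induction k using Fin.lastCases <;> simp at hk

lemma canonicalPath_injective : Injective (canonicalPath (q := q) u i) :=
  Fin.cons_injective_iff.mpr ⟨item_notMem_range_snoc_path,
    Fin.snoc_injective_iff.mpr ⟨fun _ _ h => (path.inj h).2, by rintro ⟨_, ⟨⟩⟩⟩⟩

lemma eq_of_item_mem_range_canonicalPath {u' : U}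
    (h : item u' ∈ Set.range (canonicalPath (q := q) u i)) : u' = u := by
  rw [canonicalPath, Fin.range_cons, Set.mem_insert_iff] at h
  exact item.inj (h.resolve_right item_notMem_range_snoc_path)

end

lemma exists_canonicalPath_arcs_mem (hA' : A' ⊆ arcs Sets q) (h : Reaches A' (item u) sink) :
    ∃ i, ∀ k : Fin (q + 2), (canonicalPath u i k.castSucc, canonicalPath u i k.succ) ∈ A' := by
  obtain ⟨w, hstep, hw⟩ := (ReflTransGen.cases_head h).resolve_left (by simp)
  obtain ⟨i, rfl⟩ := eq_path_zero_of_item_mem_arcs (hA' hstep)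
  obtain ⟨hmid, hlast⟩ := path_arcs_mem_of_reaches hA' hw
  refine ⟨i, fun k => ?_⟩
  induction k using Fin.cases with
  | zero => simpa [canonicalPath] using hstep
  | succ k =>
    rw [← Fin.succ_castSucc]
    simp only [canonicalPath, Fin.cons_succ, Fin.snoc_castSucc]
    induction k using Fin.lastCases with
    | last => rwa [Fin.succ_last, Fin.snoc_last]
    | cast j =>
      rw [Fin.succ_castSucc, Fin.snoc_castSucc]
      exact hmid j (Fin.zero_le _)

end

lemma sum_pathFlow_canonicalPath_le_cp (i : U → ι) (a : Vtx U ι q × Vtx U ι q) :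
    ∑ u, (pathFlow (canonicalPath u (i u)) a.1 a.2 : ℚ) ≤ cp Sets q a := by
  unfold cp
  split_ifs with ha
  · simp only [AU, mem_biUnion, mem_image, mem_univ, true_and] at ha
    obtain ⟨-, u₀, -, rfl⟩ := ha
    rw [sum_eq_single u₀ (fun u _ hu => pathFlow_eq_zero_of_notMem_range
      (fun h => hu (eq_of_item_mem_range_canonicalPath h).symm) _) (by simp)]
    exact pathFlow_le_one _ _
  · calc ∑ u, (pathFlow (canonicalPath u (i u)) a.1 a.2 : ℚ) ≤ ∑ _u : U, 1 :=
          sum_le_sum fun u _ => pathFlow_le_one _ _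
      _ = Fintype.card U := by simp

end Vtx

/-- Flow feasibility equals path feasibility in the constructed graph: there exists a family
`(f_u)_{u ∈ U}` of nonnegative flows supported on `A'`, each satisfying flow conservation at
every vertex other than `v_u` and `z`, routing one unit of flow from `v_u` to `z`, and jointly
respecting the capacities `cp` on all arcs of `A`, if and only if for every `u ∈ U` there is a
directed path from `v_u` to `z` all of whose arcs lie in `A'`. -/
theorem flow_feasibility_iff_path_feasibility (Sets : ι → Finset U) (q : ℕ)
    (A' : Finset (Vtx U ι q × Vtx U ι q)) (hA' : A' ⊆ arcs Sets q) :
    (∃ f : U → Vtx U ι q → Vtx U ι q → ℚ,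
      (∀ u x y, 0 ≤ f u x y) ∧
      (∀ u x y, (x, y) ∉ A' → f u x y = 0) ∧
      (∀ (u : U) (v : Vtx U ι q), v ≠ Vtx.item u → v ≠ Vtx.sink →
        ∑ w : Vtx U ι q, f u w v = ∑ w : Vtx U ι q, f u v w) ∧
      (∀ u : U,
        ∑ w : Vtx U ι q, f u (Vtx.item u) w - ∑ w : Vtx U ι q, f u w (Vtx.item u) = 1) ∧
      (∀ u : U,
        ∑ w : Vtx U ι q, f u w Vtx.sink - ∑ w : Vtx U ι q, f u Vtx.sink w = 1) ∧
      (∀ a ∈ arcs Sets q, ∑ u : U, f u a.1 a.2 ≤ cp Sets q a)) ↔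
    ∀ u : U, Reaches A' (Vtx.item u) Vtx.sink := by
  constructor
  · rintro ⟨f, hf, hsupp, hcons, hsource, -, -⟩ u
    have hpos := reflTransGen_of_netOutflow_pos (f u) (hf u) (hcons u) (hsource u ▸ one_pos)
    refine ReflTransGen.mono (fun x y (hxy : 0 < f u x y) => ?_) _ _ hpos
    by_contra hxy'
    exact hxy.ne' (hsupp u x y hxy')
  · intro h
    choose i hi using fun u => Vtx.exists_canonicalPath_arcs_mem hA' (h u)
    have hinj u := Vtx.canonicalPath_injective (q := q) (u := u) (i := i u)
    refine ⟨fun u => pathFlow (Vtx.canonicalPath u (i u)), fun _ => pathFlow_nonneg,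
      fun u _ _ => pathFlow_eq_zero_of_notMem (hi u),
      fun u _ h₀ h₁ => sum_pathFlow_in_eq_out (hinj u) h₀ (Vtx.canonicalPath_last ▸ h₁),
      fun u => netOutflow_pathFlow_source (hinj u),
      fun u => Vtx.canonicalPath_last ▸ netInflow_pathFlow_target (hinj u),
      fun a _ => Vtx.sum_pathFlow_canonicalPath_le_cp i a⟩
end
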